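/- Let G be a connected k-regular simple graph of girth g whose adjacency matrix A has d+1 distinct eigenvalues, with g ≥ 2d. Then F_i^{(k)}(A) = A_i for all 0 ≤ i ≤ d-1, where A_i is the i-th distance matrix of G. -/

import Mathlib

open Polynomial

noncomputable def treeF (k : ℝ) : ℕ → Polynomial ℝ
  | 0 => 1
  | 1 => X
  | 2 => X ^ 2 - C k
  | (n + 3) => X * treeF k (n + 2) - C (k - 1) * treeF k (n + 1)

/-!
Below half the girth the graph looks like a tree from every vertex: two paths with the same ends
whose total length is less than the girth coincide. Hence, if `dist u v = j` with `2 j + 1 < g`,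
no neighbour of `u` is at distance `j` from `v`, and exactly one is at distance `j - 1` when
`j > 0`; the remaining `k - 1` (or all `k` when `u = v`) are at distance `j + 1`. In matrix form,
`A * A_{i+1} = A_{i+2} + (k - [i ≠ 0]) A_i` as long as `2 i + 4 < g`, which is the three-term
recurrence defining `F_i`, so `F_i(A) = A_i` follows by induction for `2 i < g`.
-/

theorem treeF_add_two (k : ℝ) (n : ℕ) :
    treeF k (n + 2) = X * treeF k (n + 1) - C (k - if n = 0 then 0 else 1) * treeF k n := by
  cases n with
  | zero => simp [treeF, sq]
  | succ n => simp [treeF]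

namespace SimpleGraph

open Finset

variable {V : Type*} {G : SimpleGraph V} {u v w : V} {i : ℕ}

theorem Walk.IsPath.eq_of_length_add_length_lt_egirth {p q : G.Walk u v} (hp : p.IsPath)
    (hq : q.IsPath) (h : ((p.length + q.length : ℕ) : ℕ∞) < G.egirth) : p = q := by
  by_contra hne
  obtain ⟨_, _, _, c, hc, hlen⟩ := hp.exists_isCycle_length_le_add_of_ne hq hne
  exact (egirth_le_length hc).not_gt (lt_of_le_of_lt (by exact_mod_cast hlen) h)

theorem Walk.isPath_cons_of_length_le_dist {p : G.Walk w v} (hp : p.IsPath) (hadj : G.Adj u w)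
    (h : p.length ≤ G.dist u v) : (cons hadj p).IsPath := by
  classical
  refine (cons_isPath_iff hadj p).mpr ⟨hp, fun hu => ?_⟩
  have := (dist_le (p.dropUntil u hu)).trans_lt (length_dropUntil_lt_length hu hadj.ne)
  omega

theorem Adj.diff_dist_adj_left (hadj : G.Adj u w) :
    G.dist w v = G.dist u v ∨ G.dist w v = G.dist u v + 1 ∨ G.dist w v = G.dist u v - 1 := by
  simpa only [dist_comm (v := v)] using hadj.diff_dist_adj (u := v)

theorem exists_adj_dist_eq_of_dist_eq_succ (h : G.dist u v = i + 1) :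
    ∃ w, G.Adj u w ∧ G.dist w v = i := by
  have huv : u ≠ v := by rintro rfl; simp at h
  have hr : G.Reachable u v := .of_dist_ne_zero (by simp [h])
  obtain ⟨p, hp⟩ := hr.exists_walk_length_eq_dist
  obtain ⟨w, hadj, q, rfl⟩ := p.exists_eq_cons_of_ne huv
  refine ⟨w, hadj, ?_⟩
  have hle : G.dist w v ≤ i := by
    have := dist_le q
    simp only [Walk.length_cons] at hp
    omega
  rcases hadj.diff_dist_adj_left (v := v) with h' | h' | h' <;> omega

theorem Adj.eq_of_dist_eq_of_dist_eq {w₁ w₂ : V} (h₁ : G.Adj u w₁) (h₂ : G.Adj u w₂)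
    (hd₁ : G.dist w₁ v = i) (hd₂ : G.dist w₂ v = i) (huv : G.dist u v = i + 1)
    (hg : ((2 * i + 2 : ℕ) : ℕ∞) < G.egirth) : w₁ = w₂ := by
  have hr : G.Reachable u v := .of_dist_ne_zero (by simp [huv])
  obtain ⟨p₁, hp₁, hl₁⟩ := (h₁.reachable.symm.trans hr).exists_path_of_dist
  obtain ⟨p₂, hp₂, hl₂⟩ := (h₂.reachable.symm.trans hr).exists_path_of_dist
  have hp₁' := Walk.isPath_cons_of_length_le_dist hp₁ h₁ (by omega)
  have hp₂' := Walk.isPath_cons_of_length_le_dist hp₂ h₂ (by omega)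
  have hcons := hp₁'.eq_of_length_add_length_lt_egirth hp₂' (by
    simpa [hl₁, hl₂, hd₁, hd₂, two_mul, add_assoc, add_left_comm] using hg)
  simpa using congrArg (·.getVert 1) hcons

theorem Adj.dist_ne_of_dist_eq (hadj : G.Adj u w) (hr : G.Reachable u v) (huv : G.dist u v = i)
    (hg : ((2 * i + 1 : ℕ) : ℕ∞) < G.egirth) : G.dist w v ≠ i := by
  intro hwv
  obtain ⟨p, hp, hl⟩ := hr.exists_path_of_dist
  obtain ⟨q, hq, hlq⟩ := (hadj.reachable.symm.trans hr).exists_path_of_dist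
  have hcons := hp.eq_of_length_add_length_lt_egirth
    (Walk.isPath_cons_of_length_le_dist hq hadj (by omega)) (by simpa [hl, hlq, huv, hwv, two_mul,
      add_assoc] using hg)
  simpa [hl, hlq, huv, hwv] using congrArg Walk.length hcons

section Counting

variable [Fintype V] [DecidableRel G.Adj]

theorem card_adj_dist_eq_of_dist_eq_succ (huv : G.dist u v = i + 1)
    (hg : ((2 * i + 2 : ℕ) : ℕ∞) < G.egirth) :
    #{w ∈ G.neighborFinset u | G.dist w v = i} = 1 := by
  obtain ⟨w, hadj, hwv⟩ := exists_adj_dist_eq_of_dist_eq_succ huv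
  refine card_eq_one.mpr ⟨w, eq_singleton_iff_unique_mem.mpr ⟨by simp [hadj, hwv], ?_⟩⟩
  intro w' hw'
  simp only [mem_filter, mem_neighborFinset] at hw'
  exact hw'.1.eq_of_dist_eq_of_dist_eq hadj hw'.2 hwv huv hg

theorem card_adj_dist_eq_of_dist_eq (hr : G.Reachable u v) (huv : G.dist u v = i)
    (hg : ((2 * i + 1 : ℕ) : ℕ∞) < G.egirth) :
    #{w ∈ G.neighborFinset u | G.dist w v = i} = 0 := by
  simp only [card_eq_zero, filter_eq_empty_iff, mem_neighborFinset]
  exact fun w hadj => hadj.dist_ne_of_dist_eq hr huv hg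

theorem card_adj_dist_eq_of_add_two_le {j : ℕ} (huv : G.dist u v = j)
    (h : j + 2 ≤ i ∨ i + 2 ≤ j) :
    #{w ∈ G.neighborFinset u | G.dist w v = i} = 0 := by
  simp only [card_eq_zero, filter_eq_empty_iff, mem_neighborFinset]
  intro w hadj hwv
  rcases hadj.diff_dist_adj_left (v := v) with h' | h' | h' <;> omega

theorem card_adj_dist_eq_succ_add (hr : G.Reachable u v) (huv : G.dist u v = i)
    (hg : ((2 * i + 1 : ℕ) : ℕ∞) < G.egirth) :
    #{w ∈ G.neighborFinset u | G.dist w v = i + 1} + (if i = 0 then 0 else 1) = G.degree u := by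
  have hcloser : {w ∈ G.neighborFinset u | ¬G.dist w v = i + 1} =
      {w ∈ G.neighborFinset u | G.dist w v + 1 = i} := by
    refine filter_congr fun w hw => ?_
    have hadj := (mem_neighborFinset G u w).mp hw
    have hne := hadj.dist_ne_of_dist_eq hr huv hg
    rcases hadj.diff_dist_adj_left (v := v) with h' | h' | h' <;> omega
  rw [← card_neighborFinset_eq_degree, ← card_filter_add_card_filter_not
    (s := G.neighborFinset u) (fun w => G.dist w v = i + 1), hcloser]
  congr 1
  cases i with
  | zero => simp
  | succ j =>
    simpa using (card_adj_dist_eq_of_dist_eq_succ huv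
      ((Nat.cast_le.mpr (by omega)).trans_lt hg)).symm

end Counting

variable (R : Type*) (G) in
noncomputable def distMatrix [Zero R] [One R] (i : ℕ) : Matrix V V R :=
  Matrix.of fun u v => if G.dist u v = i then 1 else 0

variable {R : Type*}

theorem distMatrix_zero [DecidableEq V] [Zero R] [One R] (hconn : G.Connected) :
    G.distMatrix R 0 = 1 := by
  ext u v
  simp [distMatrix, Matrix.one_apply, hconn.dist_eq_zero_iff]

theorem distMatrix_one [DecidableRel G.Adj] [Zero R] [One R] :
    G.distMatrix R 1 = G.adjMatrix R := by
  ext u v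
  simp [distMatrix]

theorem adjMatrix_mul_distMatrix_apply [Fintype V] [DecidableRel G.Adj] [NonAssocSemiring R] :
    (G.adjMatrix R * G.distMatrix R i) u v = #{w ∈ G.neighborFinset u | G.dist w v = i} := by
  simp [adjMatrix_mul_apply, distMatrix, sum_boole]

theorem adjMatrix_mul_distMatrix_succ [Fintype V] [DecidableEq V] [DecidableRel G.Adj]
    [NonAssocRing R] {k : ℕ} (hconn : G.Connected)
    (hreg : G.IsRegularOfDegree k) (hg : ((2 * i + 4 : ℕ) : ℕ∞) < G.egirth) :
    G.adjMatrix R * G.distMatrix R (i + 1) =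
      G.distMatrix R (i + 2) + ((k : R) - if i = 0 then 0 else 1) • G.distMatrix R i := by
  have hg' {n : ℕ} (hn : n ≤ 2 * i + 4) : ((n : ℕ) : ℕ∞) < G.egirth :=
    (Nat.cast_le.mpr hn).trans_lt hg
  ext u v
  rw [adjMatrix_mul_distMatrix_apply]
  simp only [Matrix.add_apply, Matrix.smul_apply, distMatrix, Matrix.of_apply, smul_eq_mul]
  obtain hj | hj | hj | hj :
      G.dist u v = i + 2 ∨ G.dist u v = i + 1 ∨ G.dist u v = i ∨ (G.dist u v + 2 ≤ i + 1 ∨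
        i + 1 + 2 ≤ G.dist u v) := by omega
  · simp [card_adj_dist_eq_of_dist_eq_succ hj (hg' (by omega)), hj]
  · simp [card_adj_dist_eq_of_dist_eq (hconn u v) hj (hg' (by omega)), hj]
  · have hcard := card_adj_dist_eq_succ_add (hconn u v) hj (hg' (by omega))
    rw [hreg u] at hcard
    simp only [hj, ← hcard, if_neg (show i ≠ i + 2 by omega), if_true, zero_add]
    split_ifs <;> simp
  · rw [card_adj_dist_eq_of_add_two_le rfl hj]
    simp [show G.dist u v ≠ i + 2 by omega, show G.dist u v ≠ i by omega]

theorem aeval_adjMatrix_treeF [Fintype V] [DecidableEq V] [DecidableRel G.Adj] {k : ℕ}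
    (hconn : G.Connected) (hreg : G.IsRegularOfDegree k)
    (hg : ((2 * i : ℕ) : ℕ∞) < G.egirth) :
    aeval (G.adjMatrix ℝ) (treeF k i) = G.distMatrix ℝ i := by
  induction i using Nat.twoStepInduction with
  | zero => simp [treeF, distMatrix_zero hconn]
  | one => simp [treeF, distMatrix_one]
  | more n ih₀ ih₁ =>
    have hg' {m : ℕ} (hm : m ≤ 2 * (n + 2)) : ((m : ℕ) : ℕ∞) < G.egirth :=
      (Nat.cast_le.mpr hm).trans_lt hg
    rw [treeF_add_two, map_sub, map_mul, map_mul, aeval_X, aeval_C, ih₀ (hg' (by omega)),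
      ih₁ (hg' (by omega)), adjMatrix_mul_distMatrix_succ hconn hreg (hg' (by omega)),
      ← Algebra.smul_def, add_sub_cancel_right]

end SimpleGraph

theorem treeF_eq_distance_matrix_general (V : Type) [Fintype V] [DecidableEq V]
    (G : SimpleGraph V) [DecidableRel G.Adj] (k : ℕ)
    (hreg : G.IsRegularOfDegree k) (hconn : G.Connected) (d : ℕ)
    (hg : ((2 * d : ℕ) : ℕ∞) ≤ G.girth) :
    ∀ i, i < d →
      Polynomial.aeval (G.adjMatrix ℝ) (treeF (k : ℝ) i) =
        Matrix.of (fun u v => if G.dist u v = i then (1 : ℝ) else 0) := by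
  intro i hi
  have hgirth : ((2 * i : ℕ) : ℕ∞) < G.egirth :=
    calc ((2 * i : ℕ) : ℕ∞) < (2 * d : ℕ) := Nat.cast_lt.mpr (by omega)
      _ ≤ G.girth := hg
      _ ≤ G.egirth := G.egirth.natCast_toNat_le_self
  exact G.aeval_adjMatrix_treeF hconn hreg hgirth

theorem treeF_eq_distance_matrix (V : Type) [Fintype V] [DecidableEq V]
    (G : SimpleGraph V) [DecidableRel G.Adj] (k : ℕ) (hk : 2 ≤ k)
    (hreg : G.IsRegularOfDegree k) (hconn : G.Connected) (d : ℕ)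
    (hd : (spectrum ℝ (G.adjMatrix ℝ)).ncard = d + 1)
    (hg : ((2 * d : ℕ) : ℕ∞) ≤ G.girth) :
    ∀ i, i < d →
      Polynomial.aeval (G.adjMatrix ℝ) (treeF (k : ℝ) i) =
        Matrix.of (fun u v => if G.dist u v = i then (1 : ℝ) else 0) :=
  treeF_eq_distance_matrix_general V G k hreg hconn d hg
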